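/- arXiv:math/0308111 — 4 statements merged into one kernel-verified Lean document; each statement's English description precedes it below -/
import Mathlib

section
/- If G = G₁ *_H G₂ is an injective amalgamated free product which is nontrivial (i.e. neither i₁ : H → G₁ nor i₂ : H → G₂ is an isomorphism), then G is infinite. -/
/-!
Pick `g₁ ∈ G true` and `g₂ ∈ G false` outside the images of `H`. The word
`g₁ g₂ g₁ g₂ ⋯ g₁ g₂` of length `2n` alternates between the two factors and has no letter in
the base, so by the normal form theorem it does not represent an element of the image of `H`;
in particular `(g₁ g₂)ⁿ ≠ 1` for `n > 0`. Hence `g₁ g₂` has infinite order.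
-/

namespace Monoid.PushoutI

open CoprodI

variable {ι : Type*} {G : ι → Type*} {H : Type*} [∀ i, Group (G i)] [Group H]
  {φ : ∀ i, H →* G i} {i j : ι} {g₁ : G i} {g₂ : G j}

theorem exists_reduced_word_prod_eq_pow (hij : i ≠ j) (hg₁ : g₁ ∉ (φ i).range)
    (hg₂ : g₂ ∉ (φ j).range) (n : ℕ) :
    ∃ w : Word G, Reduced φ w ∧ ofCoprodI w.prod = (of (φ := φ) i g₁ * of j g₂) ^ n ∧
      w.toList.length = 2 * n ∧ w.fstIdx ≠ some j := by
  induction n with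
  | zero => exact ⟨.empty, by simp [Reduced, Word.empty], by simp, rfl, by simp [Word.fstIdx]⟩
  | succ n ih =>
    obtain ⟨w, hred, hprod, hlen, hfst⟩ := ih
    have hg₁1 : g₁ ≠ 1 := fun h => hg₁ (h ▸ one_mem _)
    have hg₂1 : g₂ ≠ 1 := fun h => hg₂ (h ▸ one_mem _)
    have hw₂ : (Word.cons g₂ w hfst hg₂1).fstIdx ≠ some i := by simpa using hij.symm
    refine ⟨Word.cons g₁ (Word.cons g₂ w hfst hg₂1) hw₂ hg₁1, ?_, ?_, ?_, by simpa using hij⟩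
    · intro g hg
      simp only [Word.cons_toList, List.mem_cons] at hg
      rcases hg with rfl | rfl | hg
      exacts [hg₁, hg₂, hred g hg]
    · simp [hprod, pow_succ', mul_assoc]
    · simp [hlen, mul_add]

theorem not_isOfFinOrder_of_mul_of (hφ : ∀ i, Function.Injective (φ i)) (hij : i ≠ j)
    (hg₁ : g₁ ∉ (φ i).range) (hg₂ : g₂ ∉ (φ j).range) :
    ¬ IsOfFinOrder (of (φ := φ) i g₁ * of j g₂) := by
  rw [isOfFinOrder_iff_pow_eq_one]
  rintro ⟨n, hn, hpow⟩
  obtain ⟨w, hred, hprod, hlen, -⟩ := exists_reduced_word_prod_eq_pow hij hg₁ hg₂ n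
  have hw : w = .empty := hred.eq_empty_of_mem_range hφ (by rw [hprod, hpow]; exact one_mem _)
  simp [hw, Word.empty] at hlen
  omega

theorem infinite_of_not_surjective (hφ : ∀ i, Function.Injective (φ i)) (hij : i ≠ j)
    (hi : ¬ Function.Surjective (φ i)) (hj : ¬ Function.Surjective (φ j)) :
    Infinite (PushoutI φ) := by
  obtain ⟨g₁, hg₁⟩ : ∃ g, g ∉ (φ i).range := by simpa [Function.Surjective] using hi
  obtain ⟨g₂, hg₂⟩ : ∃ g, g ∉ (φ j).range := by simpa [Function.Surjective] using hj
  exact Infinite.of_injective _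
    (injective_pow_iff_not_isOfFinOrder.2 (not_isOfFinOrder_of_mul_of hφ hij hg₁ hg₂))

end Monoid.PushoutI

/-- If `G = G₁ *_H G₂` is an injective amalgamated free product which is nontrivial
(neither `i₁ : H → G₁` nor `i₂ : H → G₂` is an isomorphism), then `G` is infinite. -/
theorem amalgamated_free_product_infinite
    {H : Type*} {G : Bool → Type*} [∀ b, Group (G b)] [Group H]
    (φ : ∀ b, H →* G b) (hφ : ∀ b, Function.Injective (φ b))
    (hnontriv : ∀ b, ¬ Function.Bijective (φ b)) :
    Infinite (Monoid.PushoutI φ) :=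
  have hnonsurj (b : Bool) : ¬ Function.Surjective (φ b) := fun h => hnontriv b ⟨hφ b, h⟩
  Monoid.PushoutI.infinite_of_not_surjective hφ (by decide : true ≠ false)
    (hnonsurj true) (hnonsurj false)
end

section
/- If G = G₁ *_H {t} is an injective HNN extension with stable letter t, then inside G one has G₁ ∩ t G₁ t⁻¹ = i₁(H) = t i₂(H) t⁻¹, where G₁ is identified with its image under the injective map j₁. -/
/-!
The relation `i₁(h) t = t i₂(h)` says that conjugation by `t` carries `i₂(H)` onto `i₁(H)`,
which gives the second equality and the inclusion `i₁(H) ⊆ G₁ ∩ t G₁ t⁻¹`. Conversely, if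
`t g t⁻¹ ∈ G₁` with `g ∈ G₁`, then the word `t g t⁻¹` cannot be reduced, so by Britton's lemma
`g ∈ i₂(H)`.
-/

namespace HNNExtension

variable {G : Type*} [Group G] {A B : Subgroup G} {φ : A ≃* B}

open NormalWord in
theorem mem_of_t_mul_of_mul_t_inv_mem_range {g : G}
    (hg : t * (of g : HNNExtension G A B φ) * t⁻¹ ∈ (of : G →* _).range) : g ∈ A := by
  by_contra hgA
  let w : ReducedWord G A B :=
    ⟨1, [(1, g), (-1, 1)], List.isChain_pair.2 fun hg => absurd hg hgA⟩
  have hw : w.prod φ = t * of g * t⁻¹ := by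
    simp [w, ReducedWord.prod, mul_assoc]
  simpa [w] using ReducedWord.toList_eq_nil_of_mem_of_range φ w (hw ▸ hg)

theorem map_of_right_eq_map_conj_t :
    B.map (of : G →* HNNExtension G A B φ) = (A.map of).map (MulAut.conj t).toMonoidHom := by
  ext x
  simp only [Subgroup.map_map, Subgroup.mem_map, MonoidHom.comp_apply, MulEquiv.coe_toMonoidHom,
    MulAut.conj_apply]
  constructor
  · rintro ⟨b, hb, rfl⟩
    refine ⟨φ.symm ⟨b, hb⟩, (φ.symm ⟨b, hb⟩).2, ?_⟩
    rw [← equiv_eq_conj, MulEquiv.apply_symm_apply]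
  · rintro ⟨a, ha, rfl⟩
    exact ⟨φ ⟨a, ha⟩, (φ ⟨a, ha⟩).2, equiv_eq_conj ⟨a, ha⟩⟩

theorem range_of_inf_map_conj_t :
    (of : G →* HNNExtension G A B φ).range ⊓ of.range.map (MulAut.conj t).toMonoidHom
      = B.map of := by
  refine le_antisymm ?_ ?_
  · rintro _ ⟨hx, _, ⟨g, rfl⟩, rfl⟩
    rw [map_of_right_eq_map_conj_t]
    exact ⟨of g, ⟨g, mem_of_t_mul_of_mul_t_inv_mem_range hx, rfl⟩, rfl⟩
  · refine le_inf (Subgroup.map_le_range _ _) ?_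
    rw [map_of_right_eq_map_conj_t]
    exact Subgroup.map_mono (Subgroup.map_le_range _ _)

end HNNExtension

/-- If `G = G₁ *_H {t}` is an injective HNN extension with stable letter `t` (defining relation
`i₁(h) t = t i₂(h)`), then inside `G` one has `G₁ ∩ t G₁ t⁻¹ = i₁(H) = t i₂(H) t⁻¹`,
where `G₁` is identified with its image under the injective map `j₁ = HNNExtension.of`. -/
theorem hnn_extension_intersection
    {H G₁ : Type*} [Group H] [Group G₁] (i₁ i₂ : H →* G₁)
    (h1 : Function.Injective i₁) (h2 : Function.Injective i₂) :
    (HNNExtension.of (G := G₁) (A := i₂.range) (B := i₁.range)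
          (φ := (MonoidHom.ofInjective h2).symm.trans (MonoidHom.ofInjective h1))).range ⊓
        Subgroup.map (MulAut.conj (HNNExtension.t)).toMonoidHom (HNNExtension.of).range
      = ((HNNExtension.of).comp i₁).range ∧
    ((HNNExtension.of (G := G₁) (A := i₂.range) (B := i₁.range)
          (φ := (MonoidHom.ofInjective h2).symm.trans (MonoidHom.ofInjective h1))).comp i₁).range
      = Subgroup.map (MulAut.conj (HNNExtension.t)).toMonoidHom
          ((HNNExtension.of).comp i₂).range := by
  simp only [MonoidHom.range_comp]
  exact ⟨HNNExtension.range_of_inf_map_conj_t, HNNExtension.map_of_right_eq_map_conj_t⟩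
end

section
/- Let G = G₁ *_H G₂ be an injective amalgamated free product with inclusions k : H → G, j₁ : G₁ → G, j₂ : G₂ → G. Then the simplicial chain complex of the Bass–Serre tree T of G is a resolution of ℤ: the sequence of ℤ[G]-modules 0 → ℤ[T⁽¹⁾] → ℤ[T⁽⁰⁾] → ℤ → 0 is exact, where ℤ[T⁽¹⁾] = ℤ[G/H] is the free abelian group on the edges and ℤ[T⁽⁰⁾] = ℤ[G/G₁] ⊕ ℤ[G/G₂] is the free abelian group on the vertices of T; that is, 0 → ℤ[G/H] → ℤ[G/G₁] ⊕ ℤ[G/G₂] → ℤ → 0 is exact. -/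
variable {H : Type*} {G : Bool → Type*} [∀ b, Group (G b)] [Group H]

/-- In the pushout `G = G₁ *_H G₂`, the image of `H` is contained in the image of each `Gᵢ`. -/
theorem base_range_le_of_range (φ : ∀ b, H →* G b) (b : Bool) :
    (Monoid.PushoutI.base φ).range ≤ (Monoid.PushoutI.of (φ := φ) b).range := by
  rintro x ⟨h, rfl⟩
  exact ⟨φ b h, Monoid.PushoutI.of_apply_eq_base φ b h⟩

/-- The simplicial boundary map of the Bass–Serre tree of `G = G₁ *_H G₂`:
`ℤ[G/H] → ℤ[G/G₁] ⊕ ℤ[G/G₂]`, sending the edge `gH` to the difference `gG₁ - gG₂` of its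
endpoints. -/
noncomputable def bsBoundary (φ : ∀ b, H →* G b) :
    ((Monoid.PushoutI φ ⧸ (Monoid.PushoutI.base φ).range) →₀ ℤ) →+
      ((Monoid.PushoutI φ ⧸ (Monoid.PushoutI.of (φ := φ) true).range) →₀ ℤ) ×
      ((Monoid.PushoutI φ ⧸ (Monoid.PushoutI.of (φ := φ) false).range) →₀ ℤ) :=
  (Finsupp.mapDomain.addMonoidHom (M := ℤ)
      (Subgroup.quotientMapOfLE (base_range_le_of_range φ true))).prod
    (-(Finsupp.mapDomain.addMonoidHom (M := ℤ)
      (Subgroup.quotientMapOfLE (base_range_le_of_range φ false))))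

/-- The augmentation `ℤ[G/G₁] ⊕ ℤ[G/G₂] → ℤ` sending each vertex to `1`. -/
noncomputable def bsAugmentation (φ : ∀ b, H →* G b) :
    ((Monoid.PushoutI φ ⧸ (Monoid.PushoutI.of (φ := φ) true).range) →₀ ℤ) ×
      ((Monoid.PushoutI φ ⧸ (Monoid.PushoutI.of (φ := φ) false).range) →₀ ℤ) →+ ℤ :=
  ((Finsupp.liftAddHom fun _ => AddMonoidHom.id ℤ).comp (AddMonoidHom.fst _ _)) +
    ((Finsupp.liftAddHom fun _ => AddMonoidHom.id ℤ).comp (AddMonoidHom.snd _ _))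

set_option linter.unusedSectionVars false

namespace BSAux
open Monoid Monoid.PushoutI Monoid.PushoutI.NormalWord Monoid.CoprodI

variable {φ : ∀ b, H →* G b} [∀ b, DecidableEq (G b)] (d : Transversal φ)

noncomputable def wd (g : PushoutI φ) : List (Σ b, G b) :=
  (NormalWord.equiv (d := d) g⁻¹).toList

def dropB (b : Bool) : List (Σ b, G b) → List (Σ b, G b)
  | [] => []
  | x :: t => if x.1 = b then t else x :: t

theorem equiv_eq_smul (g : PushoutI φ) :
    NormalWord.equiv (d := d) g = g • NormalWord.empty := rfl

theorem equiv_prod (g : PushoutI φ) : (NormalWord.equiv (d := d) g).prod = g := by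
  rw [equiv_eq_smul, prod_smul, prod_empty, mul_one]

theorem equiv_prod' (w : NormalWord d) : NormalWord.equiv (d := d) w.prod = w := by
  rw [equiv_eq_smul]; exact prod_smul_empty w

/-- product of a list of letters -/
def Pl (l : List (Σ b, G b)) : PushoutI φ :=
  ofCoprodI ((l.map fun x => CoprodI.of x.2).prod)

theorem Pl_nil : Pl (φ := φ) [] = 1 := by simp [Pl]

theorem Pl_cons (x : Σ b, G b) (t : List (Σ b, G b)) :
    Pl (φ := φ) (x :: t) = of x.1 x.2 * Pl t := by
  simp [Pl]

theorem prod_eq (w : NormalWord d) : w.prod = base φ w.head * Pl w.toList := rfl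

theorem wd_decomp (g : PushoutI φ) :
    g⁻¹ = base φ (NormalWord.equiv (d := d) g⁻¹).head * Pl (wd d g) :=
  (equiv_prod d g⁻¹).symm

theorem dropB_eq_or (b : Bool) (l : List (Σ b, G b)) :
    l = dropB b l ∨ ∃ x : Σ b, G b, x.1 = b ∧ l = x :: dropB b l := by
  rcases l with _ | ⟨x, t⟩
  · exact Or.inl rfl
  · by_cases hx : x.1 = b
    · exact Or.inr ⟨x, hx, by simp [dropB, hx]⟩
    · exact Or.inl (by simp [dropB, hx])

theorem wd_decompV (b : Bool) (g : PushoutI φ) :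
    ∃ c ∈ (of (φ := φ) b).range, g⁻¹ = c * Pl (dropB b (wd d g)) := by
  rcases dropB_eq_or b (wd d g) with h | ⟨⟨x1, x2⟩, hx1, h⟩
  · exact ⟨base φ (NormalWord.equiv (d := d) g⁻¹).head,
      base_range_le_of_range φ b ⟨_, rfl⟩, by rw [← h]; exact wd_decomp d g⟩
  · subst hx1
    refine ⟨base φ (NormalWord.equiv (d := d) g⁻¹).head * of x1 x2,
      mul_mem (base_range_le_of_range φ x1 ⟨_, rfl⟩) ⟨x2, rfl⟩, ?_⟩
    rw [mul_assoc, ← Pl_cons ⟨x1, x2⟩, ← h]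
    exact wd_decomp d g


-- ## quotient level
theorem wd_mul_base (g : PushoutI φ) (k : H) : wd d (g * base φ k) = wd d g := by
  unfold wd
  rw [mul_inv_rev, ← map_inv, equiv_eq_smul, equiv_eq_smul, mul_smul]
  rw [base_smul_def]

theorem dropB_of_fstIdx_ne {b : Bool} {w : Word G} (h : w.fstIdx ≠ some b) :
    dropB b w.toList = w.toList := by
  rcases hw : w.toList with _ | ⟨x, t⟩
  · rfl
  · have : x.1 ≠ b := by
      intro hx
      apply h
      simp [Word.fstIdx, hw, hx]
    simp [dropB, this]

theorem rcons_toList (b : Bool) (p : Pair d b) :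
    dropB b ((NormalWord.rcons b p).toList) = p.tail.toList := by
  show dropB b ((Word.equivPair b).symm _).toList = _
  rw [Word.equivPair_symm, Word.rcons]
  split_ifs with h
  · exact dropB_of_fstIdx_ne p.fstIdx_ne
  · simp [dropB]

theorem dropB_toList_eq (b : Bool) (w : NormalWord d) :
    dropB b w.toList = (NormalWord.equivPair b w).tail.toList := by
  conv_lhs => rw [← (NormalWord.equivPair b).symm_apply_apply w]
  rw [show ((NormalWord.equivPair b).symm (NormalWord.equivPair b w))
      = NormalWord.rcons b (NormalWord.equivPair b w) from rfl]
  exact rcons_toList d b _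

theorem smul_toList (b : Bool) (x : G b) (w : NormalWord d) :
    dropB b ((of (φ := φ) b x • w).toList) = dropB b w.toList := by
  rw [summand_smul_def]
  rw [show ((NormalWord.equivPair b).symm
      { NormalWord.equivPair b w with head := x * (NormalWord.equivPair b w).head })
      = NormalWord.rcons b _ from rfl]
  rw [rcons_toList d b _, dropB_toList_eq d b w]

theorem wd_mul_of (b : Bool) (g : PushoutI φ) (x : G b) :
    dropB b (wd d (g * of b x)) = dropB b (wd d g) := by
  unfold wd
  rw [mul_inv_rev, ← map_inv, equiv_eq_smul, equiv_eq_smul, mul_smul]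
  exact smul_toList d b x⁻¹ _

noncomputable def fE : PushoutI φ ⧸ (base φ).range → List (Σ b, G b) :=
  fun q => Quotient.liftOn' q (wd d) fun a c h => by
    rw [QuotientGroup.leftRel_apply] at h
    obtain ⟨k, hk⟩ := h
    have : c = a * base φ k := by rw [hk]; group
    rw [this, wd_mul_base]

noncomputable def fV (b : Bool) : PushoutI φ ⧸ (of (φ := φ) b).range → List (Σ b, G b) :=
  fun q => Quotient.liftOn' q (fun g => dropB b (wd d g)) fun a c h => by
    rw [QuotientGroup.leftRel_apply] at h
    obtain ⟨x, hx⟩ := h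
    have hc : c = a * of b x := by rw [hx]; group
    show dropB b (wd d a) = dropB b (wd d c)
    rw [hc, wd_mul_of]

theorem fE_mk (g : PushoutI φ) : fE d (QuotientGroup.mk g) = wd d g := rfl

theorem fV_mk (b : Bool) (g : PushoutI φ) :
    fV d b (QuotientGroup.mk g) = dropB b (wd d g) := rfl

theorem fE_injective : Function.Injective (fE d) := by
  intro q q'
  induction q using QuotientGroup.induction_on with | H g =>
  induction q' using QuotientGroup.induction_on with | H g' =>
  intro h
  rw [fE_mk, fE_mk] at h
  obtain ⟨k1, e1⟩ : ∃ k, g⁻¹ = base φ k * Pl (wd d g) := ⟨_, wd_decomp d g⟩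
  obtain ⟨k2, e2⟩ : ∃ k, g'⁻¹ = base φ k * Pl (wd d g') := ⟨_, wd_decomp d g'⟩
  rw [h] at e1
  generalize hPl : Pl (φ := φ) (wd d g') = X at e1 e2
  rw [QuotientGroup.eq]
  refine ⟨k1 * k2⁻¹, ?_⟩
  have hg' : g' = (base φ k2 * X)⁻¹ := by rw [← e2, inv_inv]
  rw [map_mul, map_inv, e1, hg']
  group

theorem fV_injective (b : Bool) : Function.Injective (fV d b) := by
  intro q q'
  induction q using QuotientGroup.induction_on with | H g =>
  induction q' using QuotientGroup.induction_on with | H g' =>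
  intro h
  rw [fV_mk, fV_mk] at h
  obtain ⟨c, hc, e1⟩ := wd_decompV d b g
  obtain ⟨c', hc', e2⟩ := wd_decompV d b g'
  rw [h] at e1
  generalize hPl : Pl (φ := φ) (dropB b (wd d g')) = X at e1 e2
  rw [QuotientGroup.eq]
  have hg' : g' = (c' * X)⁻¹ := by rw [← e2, inv_inv]
  have : g⁻¹ * g' = c * c'⁻¹ := by rw [e1, hg']; group
  rw [this]
  exact mul_mem hc (inv_mem hc')

theorem fV_quotientMap (b : Bool) (e : PushoutI φ ⧸ (base φ).range) :
    fV d b (Subgroup.quotientMapOfLE (base_range_le_of_range φ b) e) = dropB b (fE d e) := by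
  induction e using QuotientGroup.induction_on with | H g =>
  rw [Subgroup.quotientMapOfLE_apply_mk, fV_mk, fE_mk]

theorem wd_one : wd d (1 : PushoutI φ) = [] := by
  unfold wd
  rw [inv_one, equiv_eq_smul, one_smul]
  rfl

theorem fE_one : fE d (QuotientGroup.mk (1 : PushoutI φ)) = [] := by
  rw [fE_mk, wd_one]

theorem fV_one (b : Bool) : fV d b (QuotientGroup.mk (1 : PushoutI φ)) = [] := by
  rw [fV_mk, wd_one]; rfl

theorem wd_chain (g : PushoutI φ) :
    (wd d g).Chain' (fun x y => x.1 ≠ y.1) :=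
  (NormalWord.equiv (d := d) g⁻¹).chain_ne

theorem dropB_dropB {b : Bool} {l : List (Σ b, G b)}
    (h : l.Chain' fun x y => x.1 ≠ y.1) : dropB b (dropB b l) = dropB b l := by
  rcases l with _ | ⟨x, t⟩
  · rfl
  · by_cases hx : x.1 = b
    · rcases t with _ | ⟨y, t'⟩
      · simp [dropB, hx]
      · have h1 : x.1 ≠ y.1 := (List.isChain_cons_cons.1 h).1
        have h2 : ¬ y.1 = b := fun hy => h1 (hx.trans hy.symm)
        simp [dropB, hx, h2]
    · simp [dropB, hx]

theorem fV_dropB (b : Bool) (v : PushoutI φ ⧸ (of (φ := φ) b).range) :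
    dropB b (fV d b v) = fV d b v := by
  induction v using QuotientGroup.induction_on with | H g =>
  rw [fV_mk]
  exact dropB_dropB (wd_chain d g)


/-- A normal word with head `1` whose letter list is `dropB b` of the letter list of a given
normal word. -/
noncomputable def dropWord (b : Bool) (n : NormalWord d) : NormalWord d :=
  { toList := dropB b n.toList
    ne_one := fun l hl => n.ne_one l (by
      rcases dropB_eq_or b n.toList with h | ⟨x, _, h⟩
      · rw [h]; exact hl
      · rw [h]; exact List.mem_cons_of_mem x hl)
    chain_ne := by
      rcases dropB_eq_or b n.toList with h | ⟨x, _, h⟩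
      · rw [← h]; exact n.chain_ne
      · have := n.chain_ne
        rw [h] at this
        exact this.tail
    head := 1
    normalized := fun i g hg => n.normalized i g (by
      rcases dropB_eq_or b n.toList with h | ⟨x, _, h⟩
      · rw [h]; exact hg
      · rw [h]; exact List.mem_cons_of_mem x hg) }

theorem dropWord_toList (b : Bool) (n : NormalWord d) :
    (dropWord d b n).toList = dropB b n.toList := rfl

theorem dropWord_prod (b : Bool) (n : NormalWord d) :
    (dropWord d b n).prod = Pl (dropB b n.toList) := by
  rw [prod_eq, dropWord_toList]
  show base φ 1 * _ = _
  rw [map_one, one_mul]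

theorem exists_parent (b : Bool) (v : PushoutI φ ⧸ (of (φ := φ) b).range) :
    ∃ e : PushoutI φ ⧸ (base φ).range,
      Subgroup.quotientMapOfLE (base_range_le_of_range φ b) e = v ∧ fE d e = fV d b v := by
  induction v using QuotientGroup.induction_on with | H g =>
  set n : NormalWord d := NormalWord.equiv (d := d) g⁻¹ with hn
  refine ⟨QuotientGroup.mk (dropWord d b n).prod⁻¹, ?_, ?_⟩
  · rw [Subgroup.quotientMapOfLE_apply_mk, QuotientGroup.eq]
    obtain ⟨c, hc, e1⟩ := wd_decompV d b g
    have hwn : wd d g = n.toList := rfl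
    rw [inv_inv, dropWord_prod, ← hwn]
    have hg : g = (c * Pl (dropB b (wd d g)))⁻¹ := by rw [← e1, inv_inv]
    generalize hPl : Pl (φ := φ) (dropB b (wd d g)) = X at hg ⊢
    rw [hg, show X * (c * X)⁻¹ = c⁻¹ by group]
    exact inv_mem hc
  · rw [fE_mk, fV_mk]
    unfold wd
    rw [inv_inv, equiv_prod' d (dropWord d b n)]
    rfl


section Homological

open Finsupp

variable (φ)

/-- the quotient map `G/H → G/G_b` -/
abbrev πB (b : Bool) : PushoutI φ ⧸ (base φ).range → PushoutI φ ⧸ (of (φ := φ) b).range :=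
  Subgroup.quotientMapOfLE (base_range_le_of_range φ b)

/-- the ambient group of vertex chains -/
abbrev T := ((PushoutI φ ⧸ (of (φ := φ) true).range) →₀ ℤ) ×
  ((PushoutI φ ⧸ (of (φ := φ) false).range) →₀ ℤ)

/-- inclusion of a vertex, as an element of the chain group -/
noncomputable def iota : ∀ b : Bool, (PushoutI φ ⧸ (of (φ := φ) b).range) → T φ
  | true, v => (Finsupp.single v 1, 0)
  | false, v => (0, Finsupp.single v 1)

/-- vertex with coefficient -/
noncomputable def iotaC : ∀ b : Bool, (PushoutI φ ⧸ (of (φ := φ) b).range) → ℤ → T φ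
  | true, v, c => (Finsupp.single v c, 0)
  | false, v, c => (0, Finsupp.single v c)

theorem boundary_single (e : PushoutI φ ⧸ (base φ).range) (c : ℤ) :
    bsBoundary φ (single e c) = (single (πB φ true e) c, -single (πB φ false e) c) := by
  simp only [bsBoundary, AddMonoidHom.prod_apply, AddMonoidHom.neg_apply]
  show (Finsupp.mapDomain _ _, -Finsupp.mapDomain _ _) = _
  rw [mapDomain_single, mapDomain_single]

theorem boundary_single_one (e : PushoutI φ ⧸ (base φ).range) :
    bsBoundary φ (single e 1) = iota φ true (πB φ true e) - iota φ false (πB φ false e) := by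
  rw [boundary_single]
  simp [iota, Prod.ext_iff]

theorem aug_iota (b : Bool) (v : PushoutI φ ⧸ (of (φ := φ) b).range) :
    bsAugmentation φ (iota φ b v) = 1 := by
  cases b <;>
  simp [bsAugmentation, iota, liftAddHom_apply_single]


theorem aug_single_fst (v : PushoutI φ ⧸ (of (φ := φ) true).range) (c : ℤ) :
    bsAugmentation φ (single v c, 0) = c := by
  simp [bsAugmentation, liftAddHom_apply_single]

theorem root_eq {d : Transversal φ} (b : Bool) (v : PushoutI φ ⧸ (of (φ := φ) b).range)
    (h : fV d b v = []) : v = QuotientGroup.mk 1 :=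
  fV_injective d b (by rw [h, fV_one])

noncomputable def rootVal : Bool → ((PushoutI φ ⧸ (base φ).range) →₀ ℤ)
  | true => 0
  | false => -single (QuotientGroup.mk 1) 1

theorem boundary_rootVal (b : Bool) :
    bsBoundary φ (rootVal φ b) = iota φ b (QuotientGroup.mk 1) - iota φ true (QuotientGroup.mk 1) := by
  cases b
  · show bsBoundary φ (-single (QuotientGroup.mk 1) 1) = _
    rw [map_neg, boundary_single_one]
    show -(iota φ true (QuotientGroup.mk 1) - iota φ false (QuotientGroup.mk 1)) = _
    abel
  · show bsBoundary φ 0 = _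
    rw [map_zero, sub_self]

noncomputable def sAux (d : Transversal φ) :
    ℕ → ∀ b : Bool, (PushoutI φ ⧸ (of (φ := φ) b).range) →
      ((PushoutI φ ⧸ (base φ).range) →₀ ℤ)
  | 0, b, _ => rootVal φ b
  | (n+1), b, v =>
    if fV d b v = [] then rootVal φ b
    else (if b = true then (1 : ℤ) else -1) • single (Classical.choose (exists_parent d b v)) 1
      + sAux d n (!b) (πB φ (!b) (Classical.choose (exists_parent d b v)))

theorem sAux_spec (d : Transversal φ) :
    ∀ (n : ℕ) (b : Bool) (v : PushoutI φ ⧸ (of (φ := φ) b).range),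
      (fV d b v).length ≤ n →
      bsBoundary φ (sAux φ d n b v) = iota φ b v - iota φ true (QuotientGroup.mk 1) := by
  intro n
  induction n with
  | zero =>
    intro b v h
    have hnil : fV d b v = [] := List.length_eq_zero_iff.1 (Nat.le_zero.1 h)
    rw [root_eq φ b v hnil]
    exact boundary_rootVal φ b
  | succ n ih =>
    intro b v h
    by_cases hnil : fV d b v = []
    · rw [show sAux φ d (n+1) b v = rootVal φ b from by rw [sAux, if_pos hnil]]
      rw [root_eq φ b v hnil]
      exact boundary_rootVal φ b
    · obtain ⟨hπ, hfE⟩ := Classical.choose_spec (exists_parent d b v)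
      set e := Classical.choose (exists_parent d b v) with he
      rcases hu : fV d b v with _ | ⟨x, t⟩
      · exact absurd hu hnil
      have hx : x.1 ≠ b := by
        intro hxb
        have hd := fV_dropB d b v
        rw [hu] at hd
        simp only [dropB, hxb, if_pos] at hd
        have hlen := congrArg List.length hd
        simp at hlen
      have hx' : x.1 = !b := by
        cases hxv : x.1 <;> cases b <;> simp_all
      have hv' : fV d (!b) (πB φ (!b) e) = t := by
        rw [fV_quotientMap, hfE, hu]
        simp [dropB, hx']
      have hlt : (fV d (!b) (πB φ (!b) e)).length ≤ n := by
        rw [hv']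
        rw [hu] at h
        simpa using Nat.lt_succ_iff.mp (Nat.lt_of_lt_of_le (Nat.lt_succ_self _) h)
      have hih := ih (!b) (πB φ (!b) e) hlt
      cases b
      · have hπ' : πB φ false e = v := hπ
        have hih' : bsBoundary φ (sAux φ d n true (πB φ true e))
            = iota φ true (πB φ true e) - iota φ true (QuotientGroup.mk 1) := hih
        rw [show sAux φ d (n+1) false v
            = (-1 : ℤ) • single e 1 + sAux φ d n true (πB φ true e) from by
              rw [sAux, if_neg hnil]
              rfl]
        rw [map_add, map_zsmul, boundary_single_one, hih', hπ', neg_smul, one_smul]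
        abel
      · have hπ' : πB φ true e = v := hπ
        have hih' : bsBoundary φ (sAux φ d n false (πB φ false e))
            = iota φ false (πB φ false e) - iota φ true (QuotientGroup.mk 1) := hih
        rw [show sAux φ d (n+1) true v
            = (1 : ℤ) • single e 1 + sAux φ d n false (πB φ false e) from by
              rw [sAux, if_neg hnil]
              rfl]
        rw [map_add, map_zsmul, boundary_single_one, hih', hπ', one_smul]
        abel

noncomputable def sV (d : Transversal φ) (b : Bool)
    (v : PushoutI φ ⧸ (of (φ := φ) b).range) : (PushoutI φ ⧸ (base φ).range) →₀ ℤ :=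
  sAux φ d (fV d b v).length b v

theorem boundary_sV (d : Transversal φ) (b : Bool) (v : PushoutI φ ⧸ (of (φ := φ) b).range) :
    bsBoundary φ (sV φ d b v) = iota φ b v - iota φ true (QuotientGroup.mk 1) :=
  sAux_spec φ d _ b v le_rfl


noncomputable def Shom (d : Transversal φ) :
    T φ →+ ((PushoutI φ ⧸ (base φ).range) →₀ ℤ) :=
  ((liftAddHom fun v => (zmultiplesHom _ (sV φ d true v))).comp (AddMonoidHom.fst _ _)) +
    ((liftAddHom fun v => (zmultiplesHom _ (sV φ d false v))).comp (AddMonoidHom.snd _ _))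

theorem aug_single_snd (v : PushoutI φ ⧸ (of (φ := φ) false).range) (c : ℤ) :
    bsAugmentation φ (0, single v c) = c := by
  simp [bsAugmentation, liftAddHom_apply_single]

theorem prod_hom_ext {A B C : Type*} [AddMonoid A] [AddMonoid B] [AddCommMonoid C]
    {f g : A × B →+ C}
    (h1 : f.comp (AddMonoidHom.inl A B) = g.comp (AddMonoidHom.inl A B))
    (h2 : f.comp (AddMonoidHom.inr A B) = g.comp (AddMonoidHom.inr A B)) : f = g := by
  ext x
  have hx : x = ((x.1, 0) : A × B) + (0, x.2) := by
    ext <;> simp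
  rw [hx, map_add, map_add,
    show ((x.1, (0 : B)) : A × B) = AddMonoidHom.inl A B x.1 from rfl,
    show (((0 : A), x.2) : A × B) = AddMonoidHom.inr A B x.2 from rfl,
    ← AddMonoidHom.comp_apply, ← AddMonoidHom.comp_apply f, h1, h2,
    AddMonoidHom.comp_apply, AddMonoidHom.comp_apply]

theorem Shom_fst (d : Transversal φ) (v : PushoutI φ ⧸ (of (φ := φ) true).range) :
    Shom φ d (single v 1, 0) = sV φ d true v := by
  simp [Shom, liftAddHom_apply_single]

theorem Shom_snd (d : Transversal φ) (v : PushoutI φ ⧸ (of (φ := φ) false).range) :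
    Shom φ d (0, single v 1) = sV φ d false v := by
  simp [Shom, liftAddHom_apply_single]

theorem smul_iota (b : Bool) (c : ℤ) (v : PushoutI φ ⧸ (of (φ := φ) b).range) :
    c • iota φ b v = iotaC φ b v c := by
  cases b <;> simp [iota, iotaC, smul_single]

theorem boundary_Shom (d : Transversal φ) :
    (bsBoundary φ).comp (Shom φ d)
      = AddMonoidHom.id _
        - ((zmultiplesHom _ (iota φ true (QuotientGroup.mk 1)) : ℤ →+ T φ)).comp
            (bsAugmentation φ) := by
  refine prod_hom_ext ?_ ?_
  · refine Finsupp.addHom_ext fun v c => ?_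
    show bsBoundary φ (Shom φ d (single v c, 0))
      = (single v c, 0)
        - bsAugmentation φ (single v c, 0) • iota φ true (QuotientGroup.mk 1)
    have h1 : Shom φ d (single v c, 0) = c • sV φ d true v := by
      simp [Shom, liftAddHom_apply_single]
    rw [h1, map_zsmul, boundary_sV, aug_single_fst, smul_sub]
    congr 1
    exact smul_iota φ true c v
  · refine Finsupp.addHom_ext fun v c => ?_
    show bsBoundary φ (Shom φ d (0, single v c))
      = (0, single v c)
        - bsAugmentation φ (0, single v c) • iota φ true (QuotientGroup.mk 1)
    have h1 : Shom φ d (0, single v c) = c • sV φ d false v := by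
      simp [Shom, liftAddHom_apply_single]
    rw [h1, map_zsmul, boundary_sV, aug_single_snd, smul_sub]
    congr 1
    exact smul_iota φ false c v

end Homological
end BSAux



open Finsupp Monoid Monoid.PushoutI Monoid.PushoutI.NormalWord in
/-- For an injective amalgamated free product `G = G₁ *_H G₂`, the augmented simplicial chain
complex of the Bass–Serre tree `T` is a resolution of `ℤ`: the sequence
`0 → ℤ[T⁽¹⁾] → ℤ[T⁽⁰⁾] → ℤ → 0`, i.e. `0 → ℤ[G/H] → ℤ[G/G₁] ⊕ ℤ[G/G₂] → ℤ → 0`, is exact. -/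
theorem bass_serre_resolution_exact (φ : ∀ b, H →* G b)
    (hφ : ∀ b, Function.Injective (φ b)) :
    Function.Injective (bsBoundary φ) ∧
      (bsBoundary φ).range = (bsAugmentation φ).ker ∧
      Function.Surjective (bsAugmentation φ) := by
  classical
  letI : ∀ b, DecidableEq (G b) := fun b => Classical.decEq _
  obtain ⟨d⟩ := transversal_nonempty φ hφ
  refine ⟨?_, ?_, ?_⟩
  · rw [injective_iff_map_eq_zero]
    intro y hy
    by_contra hne
    obtain ⟨e0, he0, hmax⟩ := Finset.exists_max_image y.support
      (fun e => (BSAux.fE d e).length) (Finsupp.support_nonempty_iff.2 hne)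
    have hex : ∃ b, BSAux.dropB b (BSAux.fE d e0) = BSAux.fE d e0 := by
      rcases hw : BSAux.fE d e0 with _ | ⟨x, t⟩
      · exact ⟨true, rfl⟩
      · refine ⟨!x.1, ?_⟩
        have hx : ¬ x.1 = !x.1 := by cases x.1 <;> simp
        simp [BSAux.dropB, hx]
    obtain ⟨b, hdrop⟩ := hex
    have hzero : Finsupp.mapDomain (BSAux.πB φ b) y = 0 := by
      cases b
      · have h2 : -Finsupp.mapDomain (BSAux.πB φ false) y = 0 := congrArg Prod.snd hy
        exact neg_eq_zero.mp h2
      · exact congrArg Prod.fst hy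
    have hcoeff : Finsupp.mapDomain (BSAux.πB φ b) y (BSAux.πB φ b e0) = y e0 := by
      rw [Finsupp.mapDomain, Finsupp.sum_apply, Finsupp.sum]
      refine (Finset.sum_eq_single e0 ?_ fun h => absurd he0 h).trans ?_
      · intro e hes hne'
        rw [Finsupp.single_apply, if_neg]
        intro hpe
        have hde : BSAux.dropB b (BSAux.fE d e) = BSAux.fE d e0 := by
          have h3 := BSAux.fV_quotientMap d b e
          have h4 := BSAux.fV_quotientMap d b e0
          have hpe' : Subgroup.quotientMapOfLE (base_range_le_of_range φ b) e
              = Subgroup.quotientMapOfLE (base_range_le_of_range φ b) e0 := hpe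
          rw [← h3, hpe', h4, hdrop]
        rcases BSAux.dropB_eq_or b (BSAux.fE d e) with hcase | ⟨x, hx1, hcase⟩
        · exact hne' (BSAux.fE_injective d (by rw [hcase, hde]))
        · have hlen : (BSAux.fE d e).length = (BSAux.fE d e0).length + 1 := by
            rw [hcase, hde]
            simp
          have hle := hmax e hes
          omega
      · rw [Finsupp.single_apply, if_pos rfl]
    rw [hzero, Finsupp.zero_apply] at hcoeff
    exact (Finsupp.mem_support_iff.1 he0) hcoeff.symm
  · ext x
    simp only [AddMonoidHom.mem_range, AddMonoidHom.mem_ker]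
    constructor
    · rintro ⟨y, rfl⟩
      have hcomp : (bsAugmentation φ).comp (bsBoundary φ) = 0 := by
        refine Finsupp.addHom_ext fun e c => ?_
        show bsAugmentation φ (bsBoundary φ (Finsupp.single e c)) = 0
        rw [BSAux.boundary_single]
        have hsplit : ((Finsupp.single (BSAux.πB φ true e) c,
              -Finsupp.single (BSAux.πB φ false e) c) : BSAux.T φ)
            = (Finsupp.single (BSAux.πB φ true e) c, 0)
              - (0, Finsupp.single (BSAux.πB φ false e) c) := by
          simp [Prod.ext_iff]
        rw [hsplit, map_sub, BSAux.aug_single_fst, BSAux.aug_single_snd, sub_self]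
      exact DFunLike.congr_fun hcomp y
    · intro hx
      refine ⟨BSAux.Shom φ d x, ?_⟩
      have hS := DFunLike.congr_fun (BSAux.boundary_Shom φ d) x
      simp only [AddMonoidHom.comp_apply, AddMonoidHom.sub_apply, AddMonoidHom.id_apply] at hS
      rw [hS, hx]
      simp
  · intro n
    exact ⟨(Finsupp.single (QuotientGroup.mk 1) n, 0), BSAux.aug_single_fst φ _ n⟩
end

section
/- Let G act on a tree T with quotient T/G a single edge [0,1], i.e. the action has two vertex orbits and one edge orbit, with no inversions. Let G₁, G₂ be the stabilizers of adjacent vertices v₁, v₂ and H the stabilizer of the edge joining them. Then H = G₁ ∩ G₂, and the natural map from the amalgamated free product G₁ *_H G₂ to G is an isomorphism. -/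
/-!
Since no element maps `v₁` to `v₂`, an element preserving the edge `{v₁, v₂}` fixes both ends.

Surjectivity: the vertices `s • v₁`, `s • v₂` with `s ∈ G₁ ⊔ G₂` are closed under adjacency,
because every edge is a translate of `[v₁, v₂]`; by connectedness they include `g • v₁`, which
forces `g ∈ G₁ ⊔ G₂`.

Injectivity is a ping-pong argument. By the normal form theorem every element of `G₁ *_H G₂` is
`h * g₁ ⋯ gₙ` with each `gᵢ` in `G₁ \ H` or `G₂ \ H`, alternately. Each such `gᵢ` fixes one end
of the edge and moves the other, so the translates of `[v₁, v₂]` by `1, g₁, g₁g₂, …` form a walk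
that never backtracks, i.e. a path of length `n + 1` in the tree. Its endpoint is `g₁ ⋯ gₙ`
applied to `v₁` or `v₂`; for `n ≥ 1` the path has length at least `2`, so `g₁ ⋯ gₙ` cannot fix
both ends and hence is not in `H`.
-/

open MulAction

namespace Monoid.PushoutI

open CoprodI

variable {ι : Type*} {G : ι → Type*} {H K : Type*} [∀ i, Group (G i)] [Group H] [Group K]
  {φ : ∀ i, H →* G i}

theorem NormalWord.reduced {d : NormalWord.Transversal φ} (w : NormalWord d) :
    Reduced φ w.toWord := by
  rintro ⟨i, g⟩ hg hrange
  -- `d.set i` meets the base subgroup only in its representative `1` of the trivial coset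
  have h₁ := (d.compl i).equiv_fst_eq_self_of_mem_of_one_mem (d.one_mem i) hrange
  have h₂ := (d.compl i).equiv_fst_eq_one_of_mem_of_one_mem (one_mem _) (w.normalized i _ hg)
  exact w.ne_one _ hg (congrArg Subtype.val (h₁.symm.trans h₂))

theorem exists_reduced_eq_base_mul (hφ : ∀ i, Function.Injective (φ i)) (x : PushoutI φ) :
    ∃ (h : H) (w : Word G), Reduced φ w ∧ x = base φ h * ofCoprodI w.prod := by
  classical
  obtain ⟨d⟩ := NormalWord.transversal_nonempty φ hφ
  obtain ⟨w, rfl⟩ := (NormalWord.equiv (d := d)).symm.surjective x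
  exact ⟨w.head, w.toWord, w.reduced, rfl⟩

theorem lift_ofCoprodI_word_prod (f : ∀ i, G i →* K) (k : H →* K)
    (hf : ∀ i, (f i).comp (φ i) = k) (w : Word G) :
    lift f k hf (ofCoprodI w.prod) = (w.toList.map fun l => f l.1 l.2).prod := by
  simp [Word.prod, map_list_prod, Function.comp_def]

theorem lift_injective_of_reduced (hφ : ∀ i, Function.Injective (φ i)) (f : ∀ i, G i →* K)
    (k : H →* K) (hf : ∀ i, (f i).comp (φ i) = k) (hk : Function.Injective k)
    (hred : ∀ w : Word G, Reduced φ w → w ≠ .empty →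
      (w.toList.map fun l => f l.1 l.2).prod ∉ k.range) :
    Function.Injective (lift f k hf) := by
  refine (injective_iff_map_eq_one _).2 fun x hx => ?_
  obtain ⟨h, w, hw, rfl⟩ := exists_reduced_eq_base_mul hφ x
  rw [map_mul, lift_base, lift_ofCoprodI_word_prod] at hx
  obtain rfl : w = .empty := by
    by_contra hne
    exact hred w hw hne ⟨h⁻¹, by rw [map_inv, eq_comm, ← mul_eq_one_iff_eq_inv', hx]⟩
  simp only [Word.empty, List.map_nil, List.prod_nil, mul_one] at hx
  rw [hk (hx.trans k.map_one.symm), Word.prod_empty, map_one, map_one, mul_one]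

end Monoid.PushoutI

section

variable {Γ V : Type*} [Group Γ] [MulAction Γ V]

namespace Subgroup

theorem inf_le_cond (A B : Subgroup Γ) (b : Bool) : A ⊓ B ≤ bif b then A else B := by
  cases b
  exacts [inf_le_right, inf_le_left]

/-- The natural map `A *_{A ⊓ B} B →* Γ`; the factor `A` has index `true`. -/
def amalgamLift (A B : Subgroup Γ) :
    Monoid.PushoutI (fun b : Bool => inclusion (A.inf_le_cond B b)) →* Γ :=
  Monoid.PushoutI.lift (fun b => (bif b then A else B).subtype) (A ⊓ B).subtype
    fun b => by ext; rfl

theorem amalgamLift_surjective {A B : Subgroup Γ} (h : A ⊔ B = ⊤) :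
    Function.Surjective (amalgamLift A B) := by
  rw [← MonoidHom.range_eq_top, eq_top_iff, ← h]
  refine sup_le (fun a ha => ⟨Monoid.PushoutI.of true ⟨a, ha⟩, ?_⟩)
    (fun a ha => ⟨Monoid.PushoutI.of false ⟨a, ha⟩, ?_⟩) <;>
  simp [amalgamLift, Monoid.PushoutI.lift_of]

end Subgroup

namespace SimpleGraph

variable {T : SimpleGraph V}

theorem IsAcyclic.length_le_one_of_isPath (hT : T.IsAcyclic) {u w : V}
    (huw : u = w ∨ T.Adj u w) {p : T.Walk u w} (hp : p.IsPath) : p.length ≤ 1 := by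
  rcases huw with rfl | huw
  · simp [Walk.length_eq_zero_iff.2 (Walk.isPath_iff_nil.1 hp)]
  · have := hT.subsingleton_path u w |>.elim ⟨p, hp⟩ (Path.singleton huw)
    simp [congrArg (fun q : T.Path u w => q.1.length) this]

theorem IsAcyclic.exists_isPath_of_alternating (hT : T.IsAcyclic)
    (hadj : ∀ (g : Γ) (u v : V), T.Adj u v → T.Adj (g • u) (g • v))
    {vtx : Bool → V} (hvtx : ∀ b, T.Adj (vtx b) (vtx !b)) {l : List (Bool × Γ)}
    (hchain : l.IsChain (fun x y => x.1 ≠ y.1))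
    (hletter : ∀ x ∈ l, x.2 • vtx x.1 = vtx x.1 ∧ x.2 • vtx (!x.1) ≠ vtx (!x.1))
    (b : Bool) (hhead : ∀ x ∈ l.head?, x.1 = b) :
    ∃ (b' : Bool) (p : T.Walk (vtx !b) ((l.map Prod.snd).prod • vtx b')),
      p.IsPath ∧ l.length + 1 ≤ p.length ∧ p.snd = vtx b := by
  induction l generalizing b with
  | nil =>
    refine ⟨b, ?_⟩
    rw [List.map_nil, List.prod_nil, one_smul]
    exact ⟨.cons (hvtx b).symm .nil, by simp [(hvtx b).ne'], le_rfl, rfl⟩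
  | cons x l ih =>
    obtain ⟨c, g⟩ := x
    obtain rfl : c = b := hhead _ rfl
    obtain ⟨hnext, hchain⟩ := List.isChain_cons.1 hchain
    obtain ⟨hfix, hmove⟩ := hletter _ List.mem_cons_self
    have ih := ih hchain (fun x hx => hletter x (List.mem_cons_of_mem _ hx)) (!c)
      fun y hy => Bool.eq_not_iff.2 (hnext y hy).symm
    rw [Bool.not_not] at ih
    obtain ⟨b', p, hp, hlen, hsnd⟩ := ih
    let f : T →g T := ⟨(g • ·), hadj g _ _⟩
    let q : T.Walk (vtx c) (g • (l.map Prod.snd).prod • vtx b') := (p.map f).copy hfix rfl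
    have hq : q.IsPath := (Walk.isPath_copy _ _ _).2 (hp.map (MulAction.injective g))
    have hqsnd : q.snd = g • vtx !c := by simp [q, f, Walk.getVert_map, hsnd]
    refine ⟨b', ?_⟩
    rw [List.map_cons, List.prod_cons, mul_smul]
    refine ⟨.cons (hvtx c).symm q, hq.cons fun hmem => hmove ?_, ?_, Walk.snd_cons _ _⟩
    · rw [← hqsnd, ← hT.eq_snd_of_adj_start hq (hvtx c) hmem]
    · simpa [q] using hlen

theorem IsAcyclic.exists_smul_ne_of_alternating (hT : T.IsAcyclic)
    (hadj : ∀ (g : Γ) (u v : V), T.Adj u v → T.Adj (g • u) (g • v))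
    {vtx : Bool → V} (hvtx : ∀ b, T.Adj (vtx b) (vtx !b)) {l : List (Bool × Γ)} (hl : l ≠ [])
    (hchain : l.IsChain (fun x y => x.1 ≠ y.1))
    (hletter : ∀ x ∈ l, x.2 • vtx x.1 = vtx x.1 ∧ x.2 • vtx (!x.1) ≠ vtx (!x.1)) :
    ∃ b, (l.map Prod.snd).prod • vtx b ≠ vtx b := by
  obtain ⟨x, l', rfl⟩ := List.exists_cons_of_ne_nil hl
  obtain ⟨b', p, hp, hlen, -⟩ :=
    hT.exists_isPath_of_alternating hadj hvtx hchain hletter x.1 (fun y hy => by simp_all)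
  refine ⟨b', fun hb' => ?_⟩
  have hclose : vtx (!x.1) = vtx b' ∨ T.Adj (vtx !x.1) (vtx b') := by
    by_cases h : b' = !x.1
    · exact .inl (h ▸ rfl)
    · obtain rfl : b' = x.1 := by simpa using h
      exact .inr (by simpa using hvtx (!x.1))
  have := hT.length_le_one_of_isPath hclose ((Walk.isPath_copy _ rfl hb').2 hp)
  rw [Walk.length_copy] at this
  rw [List.length_cons] at hlen
  omega

theorem IsAcyclic.amalgamLift_stabilizer_injective (hT : T.IsAcyclic)
    (hadj : ∀ (g : Γ) (u v : V), T.Adj u v → T.Adj (g • u) (g • v))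
    {v₁ v₂ : V} (hv : T.Adj v₁ v₂) :
    Function.Injective (Subgroup.amalgamLift (stabilizer Γ v₁) (stabilizer Γ v₂)) := by
  let vtx : Bool → V := fun b => bif b then v₁ else v₂
  have hvtx : ∀ b, T.Adj (vtx b) (vtx !b) := Bool.forall_bool.2 ⟨hv.symm, hv⟩
  have hmem : ∀ b (g : Γ),
      g ∈ (bif b then stabilizer Γ v₁ else stabilizer Γ v₂) ↔ g • vtx b = vtx b :=
    Bool.forall_bool.2 ⟨fun _ => Iff.rfl, fun _ => Iff.rfl⟩
  have hmem_inf : ∀ g : Γ, g ∈ stabilizer Γ v₁ ⊓ stabilizer Γ v₂ ↔ ∀ b, g • vtx b = vtx b := by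
    simp [vtx, Bool.forall_bool, and_comm]
  refine Monoid.PushoutI.lift_injective_of_reduced (fun b => Subgroup.inclusion_injective _)
    _ _ _ (Subgroup.subtype_injective _) fun w hw hne => ?_
  rintro ⟨h, hh⟩
  let l := w.toList.map fun x => (x.1, (x.2 : Γ))
  have hletter : ∀ x ∈ l, x.2 • vtx x.1 = vtx x.1 ∧ x.2 • vtx (!x.1) ≠ vtx (!x.1) := by
    simp only [l, List.mem_map]
    rintro _ ⟨⟨c, g⟩, hg, rfl⟩
    have hfix := (hmem c g).1 g.2
    refine ⟨hfix, fun hmove => hw _ hg ⟨⟨g, (hmem_inf g).2 ?_⟩, rfl⟩⟩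
    cases c
    exacts [Bool.forall_bool.2 ⟨hfix, hmove⟩, Bool.forall_bool.2 ⟨hmove, hfix⟩]
  have hl : l ≠ [] := fun hl => hne (Monoid.CoprodI.Word.ext (by simpa [l] using hl))
  obtain ⟨b, hb⟩ := hT.exists_smul_ne_of_alternating hadj hvtx hl
    ((List.isChain_map _).2 w.chain_ne) hletter
  apply hb
  have hprod : (l.map Prod.snd).prod = h := by
    rw [List.map_map]
    exact hh.symm
  rw [hprod]
  exact (hmem_inf h).1 h.2 b

theorem Connected.stabilizer_sup_stabilizer_eq_top (hT : T.Connected)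
    (hadj : ∀ (g : Γ) (u v : V), T.Adj u v → T.Adj (g • u) (g • v))
    {v₁ v₂ : V} (hdistinct : ¬∃ g : Γ, g • v₁ = v₂)
    (heorb : ∀ u v : V, T.Adj u v →
      ∃ g : Γ, (g • v₁ = u ∧ g • v₂ = v) ∨ (g • v₁ = v ∧ g • v₂ = u)) :
    stabilizer Γ v₁ ⊔ stabilizer Γ v₂ = ⊤ := by
  set K := stabilizer Γ v₁ ⊔ stabilizer Γ v₂
  have hswap (k : Γ) (hk : k • v₂ = v₁) : False := hdistinct ⟨k⁻¹, inv_smul_eq_iff.2 hk.symm⟩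
  let S : Set V := {u | ∃ s ∈ K, s • v₁ = u ∨ s • v₂ = u}
  have hS : ∀ u w, T.Adj u w → u ∈ S → w ∈ S := by
    rintro u w huw ⟨s, hs, rfl | rfl⟩
    · obtain ⟨k, ⟨hk₁, hk₂⟩ | ⟨-, hk₂⟩⟩ := heorb _ _ (by simpa using hadj s⁻¹ _ _ huw)
      · refine ⟨s * k, mul_mem hs (Subgroup.mem_sup_left hk₁), .inr ?_⟩
        rw [mul_smul, hk₂, smul_inv_smul]
      · exact (hswap k hk₂).elim
    · obtain ⟨k, ⟨hk₁, -⟩ | ⟨hk₁, hk₂⟩⟩ := heorb _ _ (by simpa using hadj s⁻¹ _ _ huw)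
      · exact (hdistinct ⟨k, hk₁⟩).elim
      · refine ⟨s * k, mul_mem hs (Subgroup.mem_sup_right hk₂), .inl ?_⟩
        rw [mul_smul, hk₁, smul_inv_smul]
  have hreach {w : V} (h : T.Reachable v₁ w) : w ∈ S := by
    rw [reachable_iff_reflTransGen] at h
    induction h with
    | refl => exact ⟨1, one_mem K, .inl (one_smul Γ v₁)⟩
    | tail _ hadj' ih => exact hS _ _ hadj' ih
  refine eq_top_iff.2 fun g _ => ?_
  obtain ⟨s, hs, h | h⟩ := hreach (hT v₁ (g • v₁))
  · have : s⁻¹ * g ∈ stabilizer Γ v₁ := by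
      rw [mem_stabilizer_iff, mul_smul, ← h, inv_smul_smul]
    simpa using mul_mem hs (Subgroup.mem_sup_left this)
  · exact (hdistinct ⟨s⁻¹ * g, by rw [mul_smul, ← h, inv_smul_smul]⟩).elim

end SimpleGraph

end

/-- Let a group `Γ` act on a tree `T` (by graph automorphisms, without inversions) with
quotient `T/Γ` a single edge: there are two vertex orbits, represented by adjacent vertices
`v₁, v₂`, and one edge orbit. Let `G₁, G₂` be the stabilizers of `v₁, v₂` and `H` the
(setwise) stabilizer of the edge joining them. Then `H = G₁ ∩ G₂`, and the natural map from
the amalgamated free product `G₁ *_H G₂` to `Γ` (induced by the inclusions of the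
stabilizers) is an isomorphism. -/
theorem amalgam_of_action_on_tree {Γ V : Type*} [Group Γ] [MulAction Γ V]
    (T : SimpleGraph V) (hT : T.IsTree)
    (hadj : ∀ (g : Γ) (u v : V), T.Adj u v → T.Adj (g • u) (g • v))
    (v₁ v₂ : V) (hv : T.Adj v₁ v₂)
    (hdistinct : ¬∃ g : Γ, g • v₁ = v₂)
    (heorb : ∀ u v : V, T.Adj u v →
      ∃ g : Γ, (g • v₁ = u ∧ g • v₂ = v) ∨ (g • v₁ = v ∧ g • v₂ = u)) :
    ({g : Γ | (g • v₁ = v₁ ∧ g • v₂ = v₂) ∨ (g • v₁ = v₂ ∧ g • v₂ = v₁)} : Set Γ)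
        = ↑(MulAction.stabilizer Γ v₁ ⊓ MulAction.stabilizer Γ v₂) ∧
      Function.Bijective
        (Monoid.PushoutI.lift
          (φ := fun b : Bool =>
            Subgroup.inclusion
              (show MulAction.stabilizer Γ v₁ ⊓ MulAction.stabilizer Γ v₂ ≤
                  (bif b then MulAction.stabilizer Γ v₁ else MulAction.stabilizer Γ v₂) by
                cases b
                · exact inf_le_right
                · exact inf_le_left))
          (fun b => (bif b then MulAction.stabilizer Γ v₁
            else MulAction.stabilizer Γ v₂).subtype)
          (MulAction.stabilizer Γ v₁ ⊓ MulAction.stabilizer Γ v₂).subtype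
          (fun b => by ext x; rfl)) := by
  refine ⟨?_, ?_, ?_⟩
  · ext g
    simp only [Set.mem_ofPred_eq, SetLike.mem_coe, Subgroup.mem_inf, mem_stabilizer_iff]
    exact ⟨fun h => h.resolve_right fun h' => hdistinct ⟨g, h'.1⟩, .inl⟩
  · exact hT.isAcyclic.amalgamLift_stabilizer_injective hadj hv
  · exact Subgroup.amalgamLift_surjective
      (hT.connected.stabilizer_sup_stabilizer_eq_top hadj hdistinct heorb)
end
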